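/- Let S be a finite set of at least 2 points in ℝ² in convex position and p a point outside the convex hull of S. Then the function that assigns to each q ∈ S the signed side of q relative to each line through p and a point of S determines exactly two tangent points: there exist exactly two points q ∈ S such that S lies in a closed half-plane bounded by the line through p and q, unless all points of S ∪ {p} are collinear. -/

import Mathlib

/-!
Separate `p` from the hull of `S` by a line: some `n` has `0 < dot n (x - p)` on `S`, so every
`x ∈ S` is seen from `p` inside an open half-plane, where the "slope"
`cross n (x - p) / dot n (x - p)` orders the rays `p → x` by angle. The points of minimal and
maximal slope are the two tangent points; if they coincided, every `x - p` would be parallel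
to a single vector and `S ∪ {p}` would be collinear.
-/

/-- Cross product of planar vectors. -/
def cross (u v : ℝ × ℝ) : ℝ := u.1 * v.2 - u.2 * v.1

def dot (u v : ℝ × ℝ) : ℝ := u.1 * v.1 + u.2 * v.2

lemma cross_swap (u v : ℝ × ℝ) : cross v u = -cross u v := by
  unfold cross; ring

lemma dot_mul_cross_sub_cross_mul_dot (n u v : ℝ × ℝ) :
    dot n u * cross n v - cross n u * dot n v = (n.1 ^ 2 + n.2 ^ 2) * cross u v := by
  unfold dot cross; ring

lemma sq_add_sq_smul_eq (u v : ℝ × ℝ) :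
    (u.1 ^ 2 + u.2 ^ 2) • v = dot u v • u + cross u v • (-u.2, u.1) := by
  ext <;> simp only [Prod.smul_fst, Prod.smul_snd, Prod.fst_add, Prod.snd_add, smul_eq_mul] <;>
    unfold dot cross <;> ring

lemma sq_add_sq_pos_of_ne_zero {u : ℝ × ℝ} (hu : u ≠ 0) : 0 < u.1 ^ 2 + u.2 ^ 2 := by
  rcases u with ⟨a, b⟩
  have : a ≠ 0 ∨ b ≠ 0 := by
    by_contra! h
    exact hu (by simp [h.1, h.2])
  rcases this with h | h <;> positivity

lemma exists_smul_eq_of_cross_eq_zero {u v : ℝ × ℝ} (hu : u ≠ 0) (h : cross u v = 0) :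
    ∃ r : ℝ, v = r • u := by
  have hpos := sq_add_sq_pos_of_ne_zero hu
  refine ⟨dot u v / (u.1 ^ 2 + u.2 ^ 2), ?_⟩
  have hv := sq_add_sq_smul_eq u v
  rw [h, zero_smul, add_zero] at hv
  rw [div_eq_inv_mul, mul_smul, ← hv, smul_smul, inv_mul_cancel₀ hpos.ne', one_smul]

lemma collinear_union_singleton_of_cross_eq_zero {s : Set (ℝ × ℝ)} {p q : ℝ × ℝ} (hq : q ≠ p)
    (h : ∀ x ∈ s, cross (q - p) (x - p) = 0) : Collinear ℝ (s ∪ {p}) := by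
  rw [collinear_iff_of_mem (Set.mem_union_right s (Set.mem_singleton p))]
  refine ⟨q - p, ?_⟩
  rintro x (hx | rfl)
  · obtain ⟨r, hr⟩ := exists_smul_eq_of_cross_eq_zero (sub_ne_zero.mpr hq) (h x hx)
    exact ⟨r, by rw [vadd_eq_add, ← hr, sub_add_cancel]⟩
  · exact ⟨0, by simp⟩

lemma StrongDual.apply_eq_dot (f : StrongDual ℝ (ℝ × ℝ)) (v : ℝ × ℝ) :
    f v = dot (f (1, 0), f (0, 1)) v := by
  have hv : v = v.1 • ((1 : ℝ), (0 : ℝ)) + v.2 • ((0 : ℝ), (1 : ℝ)) := by ext <;> simp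
  conv_lhs => rw [hv, map_add, map_smul, map_smul]
  unfold dot; simp only [smul_eq_mul]; ring

lemma exists_dot_sub_pos_of_notMem_convexHull {S : Finset (ℝ × ℝ)} {p : ℝ × ℝ}
    (hp : p ∉ convexHull ℝ (S : Set (ℝ × ℝ))) : ∃ n, ∀ x ∈ S, 0 < dot n (x - p) := by
  obtain ⟨f, u, hfp, hfS⟩ := geometric_hahn_banach_point_closed (convex_convexHull ℝ _)
    (S.finite_toSet.isCompact_convexHull ℝ).isClosed hp
  refine ⟨(f (1, 0), f (0, 1)), fun x hx => ?_⟩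
  rw [← StrongDual.apply_eq_dot, map_sub]
  linarith [hfS x (subset_convexHull ℝ _ hx)]

lemma cross_nonneg_of_div_le_div {n u v : ℝ × ℝ} (hu : 0 < dot n u) (hv : 0 < dot n v)
    (h : cross n u / dot n u ≤ cross n v / dot n v) : 0 ≤ cross u v := by
  have hn : n ≠ 0 := by rintro rfl; simp [dot] at hu
  rw [div_le_div_iff₀ hu hv] at h
  have := dot_mul_cross_sub_cross_mul_dot n u v
  nlinarith [sq_add_sq_pos_of_ne_zero hn]

theorem two_tangent_points_general (S : Finset (ℝ × ℝ))
    (p : ℝ × ℝ) (hp : p ∉ convexHull ℝ (S : Set (ℝ × ℝ)))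
    (hnc : ¬ Collinear ℝ ((S : Set (ℝ × ℝ)) ∪ {p})) :
    ∃ q₁ ∈ S, ∃ q₂ ∈ S, q₁ ≠ q₂ ∧
      (∀ x ∈ S, 0 ≤ cross (q₁ - p) (x - p)) ∧
      (∀ x ∈ S, cross (q₂ - p) (x - p) ≤ 0) := by
  have hS : S.Nonempty := by
    by_contra hS
    rw [Finset.not_nonempty_iff_eq_empty.mp hS] at hnc
    simp [collinear_singleton] at hnc
  obtain ⟨n, hn⟩ := exists_dot_sub_pos_of_notMem_convexHull hp
  have tangent : ∀ q ∈ S, ∀ x ∈ S, cross n (q - p) / dot n (q - p) ≤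
      cross n (x - p) / dot n (x - p) → 0 ≤ cross (q - p) (x - p) := fun q hq x hx =>
    cross_nonneg_of_div_le_div (hn q hq) (hn x hx)
  obtain ⟨q₁, hq₁, hmin⟩ := S.exists_min_image (fun x => cross n (x - p) / dot n (x - p)) hS
  obtain ⟨q₂, hq₂, hmax⟩ := S.exists_max_image (fun x => cross n (x - p) / dot n (x - p)) hS
  refine ⟨q₁, hq₁, q₂, hq₂, ?_, fun x hx => tangent q₁ hq₁ x hx (hmin x hx), fun x hx => ?_⟩
  · rintro rfl
    refine hnc (collinear_union_singleton_of_cross_eq_zero (q := q₁) ?_ fun x hx => ?_)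
    · rintro rfl
      simpa [dot] using hn q₁ hq₁
    · have h₁ := tangent q₁ hq₁ x hx (hmin x hx)
      have h₂ := tangent x hx q₁ hq₁ (hmax x hx)
      rw [cross_swap] at h₂
      linarith
  · linarith [cross_swap (q₂ - p) (x - p), tangent x hx q₂ hq₂ (hmax x hx)]

/-- Let `S` be a finite set of at least two points in convex position and let `p` lie outside
the convex hull of `S`. If `S ∪ {p}` is not collinear, then there are two distinct tangent
points from `p` to `S`: a `q₁` with all of `S` in the closed half-plane on one side of the
line through `p` and `q₁`, and a `q₂` with all of `S` in the closed half-plane on the other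
side of the line through `p` and `q₂`. -/
theorem two_tangent_points (S : Finset (ℝ × ℝ)) (hcard : 2 ≤ S.card)
    (hconv : ∀ x ∈ S, x ∈ Set.extremePoints ℝ (convexHull ℝ (S : Set (ℝ × ℝ))))
    (p : ℝ × ℝ) (hp : p ∉ convexHull ℝ (S : Set (ℝ × ℝ)))
    (hnc : ¬ Collinear ℝ ((S : Set (ℝ × ℝ)) ∪ {p})) :
    ∃ q₁ ∈ S, ∃ q₂ ∈ S, q₁ ≠ q₂ ∧
      (∀ x ∈ S, 0 ≤ cross (q₁ - p) (x - p)) ∧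
      (∀ x ∈ S, cross (q₂ - p) (x - p) ≤ 0) :=
  two_tangent_points_general S p hp hnc
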